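/- Let A and B be closed subsets of a real Hilbert space X, x̄ ∈ A ∩ B, u ∈ X, ε > 0 and q > 0. Suppose (A−u) ∩ B = ∅ and ‖u‖^q < d^q(A−u,B) + ε, where d(A−u,B) := inf{‖b−(a−u)‖ : a ∈ A, b ∈ B}. Then for any λ > 0 and η > 0 there exist points a ∈ A ∩ B_λ(x̄) and b ∈ B ∩ B_η(x̄) such that ‖b−a+u‖ > 0, ‖b−a+u‖^q < d^q(A−u,B) + ε, and q‖b−a+u‖^{q−2}·(λ·d(b−a+u, N^F_A(a)) + η·d(a−b−u, N^F_B(b))) < ε. -/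

import Mathlib

/-- The Fréchet normal cone to `Ω` at `xbar` in a real Hilbert space (identified with its
dual): `{v : limsup_{Ω∋x→xbar, x≠xbar} ⟨v, x−xbar⟩/‖x−xbar‖ ≤ 0}`. -/
def frechetNormal {X : Type*} [NormedAddCommGroup X] [InnerProductSpace ℝ X]
    (Ω : Set X) (xbar : X) : Set X :=
  {v : X | ∀ ε > (0 : ℝ), ∃ δ > (0 : ℝ), ∀ x ∈ Ω, x ≠ xbar → ‖x - xbar‖ < δ →
    (inner ℝ v (x - xbar) : ℝ) ≤ ε * ‖x - xbar‖}

/-- The distance between two sets: `d(S,T) = inf{‖s−t‖ : s ∈ S, t ∈ T}`. -/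
noncomputable def setDist {X : Type*} [NormedAddCommGroup X] (S T : Set X) : ℝ :=
  sInf {r : ℝ | ∃ s ∈ S, ∃ t ∈ T, r = ‖s - t‖}

/-!
The point `(x̄, x̄)` almost minimizes `f (a, b) = ‖b - a + u‖ ^ q` on `A × B`: its value `‖u‖ ^ q`
exceeds the infimum `d ^ q` by less than `ε`. A Borwein–Preiss smooth variational principle moves
it to a point `(a, b)` with `‖a - x̄‖ < λ`, `‖b - x̄‖ < η` that exactly minimizes `f + Φ` on
`A × B`, where `Φ = ∑ σₖ ρₖ (· - zₖ)` is a series of smoothed copies of the weighted max-norm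
`ρ w = max (‖w₁‖ / λ, ‖w₂‖ / η)`. The dual norm of `ρ` is `λ ‖ξ₁‖ + η ‖ξ₂‖`, so the two partial
derivatives of `Φ` at `(a, b)` satisfy `λ ‖∂₁Φ‖ + η ‖∂₂Φ‖ ≤ ∑ σₖ < ε`. As `(A - u) ∩ B = ∅`,
`v = b - a + u ≠ 0`, so `f` is differentiable at `(a, b)` with partial gradients
`∓ q ‖v‖ ^ (q - 2) v`, and Fermat's rule on each factor bounds the distances from `v` and `-v` to
the Fréchet normal cones by `‖∂₁Φ‖` and `‖∂₂Φ‖`, divided by `q ‖v‖ ^ (q - 2)`.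
-/

open Filter Topology ContinuousLinearMap

noncomputable section

section Smoothing

variable {E : Type*} [NormedAddCommGroup E]

def smoothNorm (t r : ℝ) (x : E) : ℝ := √(‖x‖ ^ 2 / r ^ 2 + t ^ 2)

lemma div_le_smoothNorm (t r : ℝ) (x : E) : ‖x‖ / r ≤ smoothNorm t r x :=
  Real.le_sqrt_of_sq_le (by rw [div_pow]; nlinarith [sq_nonneg t])

lemma smoothNorm_zero {t : ℝ} (ht : 0 ≤ t) (r : ℝ) : smoothNorm t r (0 : E) = t := by
  simp [smoothNorm, Real.sqrt_sq ht]

lemma exists_hasFDerivAt_smoothNorm [InnerProductSpace ℝ E] {t r : ℝ} (ht : 0 < t)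
    (hr : 0 < r) (x : E) : ∃ N : E →L[ℝ] ℝ, HasFDerivAt (smoothNorm t r) N x ∧ r * ‖N‖ ≤ 1 := by
  have hpos : 0 < ‖x‖ ^ 2 / r ^ 2 + t ^ 2 := by positivity
  have hN : 0 < smoothNorm t r x := Real.sqrt_pos.2 hpos
  refine ⟨(r ^ 2 * smoothNorm t r x)⁻¹ • innerSL ℝ x, ?_, ?_⟩
  · have h := (((hasStrictFDerivAt_norm_sq x).hasFDerivAt.mul_const (r ^ 2)⁻¹).add_const
      (t ^ 2)).sqrt (by simpa [div_eq_mul_inv] using hpos.ne')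
    convert h using 1
    · ext y; simp [smoothNorm, div_eq_mul_inv]
    · ext y
      simp only [smoothNorm, div_eq_mul_inv, mul_inv_rev, smul_apply, coe_innerSL_apply,
        smul_eq_mul, one_mul, nsmul_eq_mul, Nat.cast_ofNat]
      field_simp
  · rw [norm_smul, innerSL_apply_norm, Real.norm_eq_abs, abs_of_pos (by positivity)]
    have := div_le_smoothNorm t r x
    rw [div_le_iff₀ hr] at this
    calc r * ((r ^ 2 * smoothNorm t r x)⁻¹ * ‖x‖)
        = ‖x‖ / (smoothNorm t r x * r) := by field_simp
      _ ≤ 1 := div_le_one_of_le₀ this (by positivity)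

def smoothMax (t a b : ℝ) : ℝ := (a + b + √((a - b) ^ 2 + t ^ 2)) / 2

lemma abs_le_sqrt_sq_add_sq (a t : ℝ) : |a| ≤ √(a ^ 2 + t ^ 2) :=
  Real.abs_le_sqrt (by nlinarith [sq_nonneg t])

lemma le_smoothMax_left (t a b : ℝ) : a ≤ smoothMax t a b := by
  unfold smoothMax; linarith [le_abs_self (a - b), abs_le_sqrt_sq_add_sq (a - b) t]

lemma le_smoothMax_right (t a b : ℝ) : b ≤ smoothMax t a b := by
  unfold smoothMax; linarith [neg_abs_le (a - b), abs_le_sqrt_sq_add_sq (a - b) t]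

lemma smoothMax_self {t : ℝ} (ht : 0 ≤ t) (a : ℝ) : smoothMax t a a = a + t / 2 := by
  simp [smoothMax, Real.sqrt_sq ht]; ring

lemma HasFDerivAt.smoothMax {F : Type*} [NormedAddCommGroup F] [NormedSpace ℝ F]
    {f g : F → ℝ} {f' g' : F →L[ℝ] ℝ} {x : F} {t : ℝ} (ht : 0 < t)
    (hf : HasFDerivAt f f' x) (hg : HasFDerivAt g g' x) :
    ∃ α β : ℝ, 0 ≤ α ∧ 0 ≤ β ∧ α + β = 1 ∧
      HasFDerivAt (fun y ↦ smoothMax t (f y) (g y)) (α • f' + β • g') x := by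
  have hpos : 0 < (f x - g x) ^ 2 + t ^ 2 := by positivity
  set ρ := √((f x - g x) ^ 2 + t ^ 2)
  have hρ : 0 < ρ := Real.sqrt_pos.2 hpos
  have hθ : |(f x - g x) / ρ| ≤ 1 := by
    rw [abs_div, _root_.abs_of_pos hρ, div_le_one hρ]; exact abs_le_sqrt_sq_add_sq _ _
  obtain ⟨hθ₁, hθ₂⟩ := abs_le.1 hθ
  refine ⟨(1 + (f x - g x) / ρ) / 2, (1 - (f x - g x) / ρ) / 2, by linarith, by linarith,
    by ring, ?_⟩
  have h := ((hf.add hg).add ((((hf.sub hg).pow 2).add_const (t ^ 2)).sqrt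
    hpos.ne')).mul_const (2⁻¹ : ℝ)
  refine (h.congr_fderiv ?_).congr_of_eventuallyEq (.of_forall fun y ↦ ?_)
  · ext y
    simp only [Pi.sub_apply, one_div, mul_inv_rev, Nat.add_one_sub_one, pow_one, nsmul_eq_mul,
      Nat.cast_ofNat, smul_add, add_apply, smul_apply, smul_eq_mul, sub_apply]
    field_simp
    ring
  · simp [_root_.smoothMax, div_eq_mul_inv]

end Smoothing

section MaxNorm

variable {X Y : Type*} [NormedAddCommGroup X] [NormedAddCommGroup Y]

def smoothMaxNorm (t r₁ r₂ : ℝ) (w : X × Y) : ℝ :=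
  smoothMax t (smoothNorm t r₁ w.1) (smoothNorm t r₂ w.2)

lemma max_le_smoothMaxNorm (t r₁ r₂ : ℝ) (w : X × Y) :
    max (‖w.1‖ / r₁) (‖w.2‖ / r₂) ≤ smoothMaxNorm t r₁ r₂ w :=
  max_le ((div_le_smoothNorm t r₁ w.1).trans (le_smoothMax_left ..))
    ((div_le_smoothNorm t r₂ w.2).trans (le_smoothMax_right ..))

lemma smoothMaxNorm_zero {t : ℝ} (ht : 0 ≤ t) (r₁ r₂ : ℝ) :
    smoothMaxNorm t r₁ r₂ (0 : X × Y) = 3 / 2 * t := by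
  rw [smoothMaxNorm, Prod.fst_zero, Prod.snd_zero, smoothNorm_zero ht, smoothNorm_zero ht,
    smoothMax_self ht]
  ring

lemma exists_hasFDerivAt_smoothMaxNorm [InnerProductSpace ℝ X] [InnerProductSpace ℝ Y]
    {t r₁ r₂ : ℝ} (ht : 0 < t) (hr₁ : 0 < r₁) (hr₂ : 0 < r₂) (w : X × Y) :
    ∃ L : X × Y →L[ℝ] ℝ, HasFDerivAt (smoothMaxNorm t r₁ r₂) L w ∧
      ‖L‖ ≤ 1 / r₁ + 1 / r₂ ∧ r₁ * ‖L.comp (inl ℝ X Y)‖ + r₂ * ‖L.comp (inr ℝ X Y)‖ ≤ 1 := by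
  obtain ⟨N₁, hN₁, hN₁r⟩ := exists_hasFDerivAt_smoothNorm ht hr₁ w.1
  obtain ⟨N₂, hN₂, hN₂r⟩ := exists_hasFDerivAt_smoothNorm ht hr₂ w.2
  obtain ⟨α, β, hα, hβ, hαβ, h⟩ := HasFDerivAt.smoothMax ht (hN₁.comp w hasFDerivAt_fst)
    (hN₂.comp w hasFDerivAt_snd)
  refine ⟨_, h, ?_, ?_⟩
  · have h₁ : ‖N₁.comp (fst ℝ X Y)‖ ≤ ‖N₁‖ :=
      (opNorm_comp_le _ _).trans (mul_le_of_le_one_right (norm_nonneg _) (norm_fst_le ..))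
    have h₂ : ‖N₂.comp (snd ℝ X Y)‖ ≤ ‖N₂‖ :=
      (opNorm_comp_le _ _).trans (mul_le_of_le_one_right (norm_nonneg _) (norm_snd_le ..))
    have hN₁' : ‖N₁‖ ≤ 1 / r₁ := by rw [le_div_iff₀' hr₁]; exact hN₁r
    have hN₂' : ‖N₂‖ ≤ 1 / r₂ := by rw [le_div_iff₀' hr₂]; exact hN₂r
    have := opNorm_smul_le α (N₁.comp (fst ℝ X Y))
    have := opNorm_smul_le β (N₂.comp (snd ℝ X Y))
    have := norm_add_le (α • N₁.comp (fst ℝ X Y)) (β • N₂.comp (snd ℝ X Y))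
    rw [Real.norm_of_nonneg hα, Real.norm_of_nonneg hβ] at *
    nlinarith [norm_nonneg N₁, norm_nonneg N₂]
  · have h₁ : (α • N₁.comp (fst ℝ X Y) + β • N₂.comp (snd ℝ X Y)).comp (inl ℝ X Y) = α • N₁ := by
      ext; simp
    have h₂ : (α • N₁.comp (fst ℝ X Y) + β • N₂.comp (snd ℝ X Y)).comp (inr ℝ X Y) = β • N₂ := by
      ext; simp
    have := opNorm_smul_le α N₁
    have := opNorm_smul_le β N₂
    rw [h₁, h₂]
    rw [Real.norm_of_nonneg hα, Real.norm_of_nonneg hβ] at *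
    nlinarith

end MaxNorm

lemma weighted_norm_comp_tsum_le {X Y ι : Type*} [NormedAddCommGroup X] [NormedSpace ℝ X]
    [NormedAddCommGroup Y] [NormedSpace ℝ Y] {L : ι → X × Y →L[ℝ] ℝ} {u : ι → ℝ}
    {r₁ r₂ : ℝ} (hr₁ : 0 < r₁) (hr₂ : 0 < r₂) (hL : Summable L) (hu : Summable u)
    (hLu : ∀ i, r₁ * ‖(L i).comp (inl ℝ X Y)‖ + r₂ * ‖(L i).comp (inr ℝ X Y)‖ ≤ u i) :
    r₁ * ‖(∑' i, L i).comp (inl ℝ X Y)‖ + r₂ * ‖(∑' i, L i).comp (inr ℝ X Y)‖ ≤ ∑' i, u i := by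
  have h₁ : Summable fun i ↦ ‖(L i).comp (inl ℝ X Y)‖ :=
    (hu.div_const r₁).of_nonneg_of_le (fun _ ↦ norm_nonneg _) fun i ↦ by
      rw [le_div_iff₀' hr₁]
      linarith [hLu i, mul_nonneg hr₂.le (norm_nonneg ((L i).comp (inr ℝ X Y)))]
  have h₂ : Summable fun i ↦ ‖(L i).comp (inr ℝ X Y)‖ :=
    (hu.div_const r₂).of_nonneg_of_le (fun _ ↦ norm_nonneg _) fun i ↦ by
      rw [le_div_iff₀' hr₂]
      linarith [hLu i, mul_nonneg hr₁.le (norm_nonneg ((L i).comp (inl ℝ X Y)))]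
  have hinl : (∑' i, L i).comp (inl ℝ X Y) = ∑' i, (L i).comp (inl ℝ X Y) :=
    (precomp ℝ (inl ℝ X Y)).map_tsum hL
  have hinr : (∑' i, L i).comp (inr ℝ X Y) = ∑' i, (L i).comp (inr ℝ X Y) :=
    (precomp ℝ (inr ℝ X Y)).map_tsum hL
  rw [hinl, hinr]
  calc r₁ * ‖∑' i, (L i).comp (inl ℝ X Y)‖ + r₂ * ‖∑' i, (L i).comp (inr ℝ X Y)‖
      ≤ r₁ * ∑' i, ‖(L i).comp (inl ℝ X Y)‖ + r₂ * ∑' i, ‖(L i).comp (inr ℝ X Y)‖ := by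
        gcongr <;> exact norm_tsum_le_tsum_norm ‹_›
    _ = ∑' i, (r₁ * ‖(L i).comp (inl ℝ X Y)‖ + r₂ * ‖(L i).comp (inr ℝ X Y)‖) := by
        rw [← tsum_mul_left, ← tsum_mul_left, (h₁.mul_left r₁).tsum_add (h₂.mul_left r₂)]
    _ ≤ ∑' i, u i := ((h₁.mul_left r₁).add (h₂.mul_left r₂)).tsum_le_tsum hLu hu

lemma Prod.norm_le_max_mul {X Y : Type*} [NormedAddCommGroup X] [NormedAddCommGroup Y]
    {r₁ r₂ : ℝ} (hr₁ : 0 < r₁) (hr₂ : 0 < r₂) (w : X × Y) :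
    ‖w‖ ≤ max r₁ r₂ * max (‖w.1‖ / r₁) (‖w.2‖ / r₂) := by
  rw [Prod.norm_def]
  refine max_le ?_ ?_
  · calc ‖w.1‖ = r₁ * (‖w.1‖ / r₁) := by field_simp
      _ ≤ _ := mul_le_mul (le_max_left ..) (le_max_left ..) (by positivity)
          (hr₁.le.trans (le_max_left ..))
  · calc ‖w.2‖ = r₂ * (‖w.2‖ / r₂) := by field_simp
      _ ≤ _ := mul_le_mul (le_max_right ..) (le_max_right ..) (by positivity)
          (hr₁.le.trans (le_max_left ..))

/-- Data of a Borwein–Preiss iteration for `f` on `C` started at `z₀`: `σ₀` is the weight of the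
first penalty, and `δ` is both the sum of all later weights and the total slack allowed in the
approximate minimizations. -/
structure SmoothVariationalData (X Y : Type*) [NormedAddCommGroup X] [NormedAddCommGroup Y] where
  C : Set (X × Y)
  isClosed_C : IsClosed C
  f : X × Y → ℝ
  continuous_f : Continuous f
  m : ℝ
  le_f : ∀ z ∈ C, m ≤ f z
  z₀ : X × Y
  z₀_mem : z₀ ∈ C
  r₁ : ℝ
  r₂ : ℝ
  σ₀ : ℝ
  δ : ℝ
  r₁_pos : 0 < r₁
  r₂_pos : 0 < r₂
  σ₀_pos : 0 < σ₀
  δ_pos : 0 < δ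

namespace SmoothVariationalData

variable {X Y : Type*} [NormedAddCommGroup X] [NormedAddCommGroup Y]
  (P : SmoothVariationalData X Y)

def weight : ℕ → ℝ
  | 0 => P.σ₀
  | k + 1 => P.δ * (1 / 2) ^ (k + 1)

def tol (k : ℕ) : ℝ := P.δ * (1 / 8) ^ k

def penalty (k : ℕ) (w : X × Y) : ℝ :=
  P.weight k * smoothMaxNorm (P.tol k / (3 * P.weight k)) P.r₁ P.r₂ w

lemma weight_pos : ∀ k, 0 < P.weight k
  | 0 => P.σ₀_pos
  | k + 1 => mul_pos P.δ_pos (by positivity)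

lemma tol_pos (k : ℕ) : 0 < P.tol k := mul_pos P.δ_pos (by positivity)

lemma tol_succ (k : ℕ) : P.tol (k + 1) = P.tol k / 8 := by
  simp only [tol, pow_succ]; ring

lemma tendsto_tol : Tendsto P.tol atTop (𝓝 0) := by
  have := (tendsto_pow_atTop_nhds_zero_of_lt_one (r := (1 / 8 : ℝ)) (by norm_num)
    (by norm_num)).const_mul P.δ
  rwa [mul_zero] at this

lemma penalty_zero (k : ℕ) : P.penalty k 0 = P.tol k / 2 := by
  have := P.weight_pos k
  rw [penalty, smoothMaxNorm_zero (by have := P.tol_pos k; positivity)]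
  field_simp

lemma weight_mul_max_le_penalty (k : ℕ) (w : X × Y) :
    P.weight k * max (‖w.1‖ / P.r₁) (‖w.2‖ / P.r₂) ≤ P.penalty k w :=
  mul_le_mul_of_nonneg_left (max_le_smoothMaxNorm ..) (P.weight_pos k).le

lemma penalty_nonneg (k : ℕ) (w : X × Y) : 0 ≤ P.penalty k w :=
  le_trans (mul_nonneg (P.weight_pos k).le
    (le_max_of_le_left (div_nonneg (norm_nonneg _) P.r₁_pos.le)))
    (P.weight_mul_max_le_penalty k w)

lemma continuous_penalty (k : ℕ) : Continuous (P.penalty k) := by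
  unfold penalty smoothMaxNorm smoothMax smoothNorm; fun_prop

def pick (F : X × Y → ℝ) (η : ℝ) : X × Y :=
  Classical.epsilon fun x ↦ x ∈ P.C ∧ F x ≤ sInf (F '' P.C) + η

lemma pick_spec (F : X × Y → ℝ) {η : ℝ} (hη : 0 < η) :
    P.pick F η ∈ P.C ∧ F (P.pick F η) ≤ sInf (F '' P.C) + η := by
  obtain ⟨_, ⟨x, hx, rfl⟩, hlt⟩ :=
    Real.lt_sInf_add_pos (Set.Nonempty.image F ⟨P.z₀, P.z₀_mem⟩) hη
  exact Classical.epsilon_spec (p := fun x ↦ x ∈ P.C ∧ F x ≤ sInf (F '' P.C) + η)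
    ⟨x, hx, hlt.le⟩

/- `iter (n + 1)` is an approximate minimizer on `C` of the partial sum built from
`iter 0, …, iter n`, so the partial sums carry the recursion; `partialSum_eq` is the closed
form. -/
def partialSum : ℕ → X × Y → ℝ
  | 0 => fun x ↦ P.f x + P.penalty 0 (x - P.z₀)
  | n + 1 => fun x ↦
      partialSum n x + P.penalty (n + 1) (x - P.pick (partialSum n) (P.tol (n + 1) / 2))

def iter : ℕ → X × Y
  | 0 => P.z₀
  | n + 1 => P.pick (P.partialSum n) (P.tol (n + 1) / 2)

lemma partialSum_succ (n : ℕ) (x : X × Y) :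
    P.partialSum (n + 1) x = P.partialSum n x + P.penalty (n + 1) (x - P.iter (n + 1)) := rfl

lemma partialSum_eq (n : ℕ) (x : X × Y) :
    P.partialSum n x = P.f x + ∑ k ∈ Finset.range (n + 1), P.penalty k (x - P.iter k) := by
  induction n with
  | zero => simp [partialSum, iter]
  | succ n ih => rw [partialSum_succ, ih, Finset.sum_range_succ _ (n + 1), add_assoc]

lemma monotone_partialSum (x : X × Y) : Monotone fun n ↦ P.partialSum n x :=
  monotone_nat_of_le_succ fun n ↦ by
    rw [partialSum_succ]; linarith [P.penalty_nonneg (n + 1) (x - P.iter (n + 1))]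

lemma le_partialSum (n : ℕ) {x : X × Y} (hx : x ∈ P.C) : P.m ≤ P.partialSum n x := by
  refine (P.le_f x hx).trans ?_
  rw [partialSum_eq]
  linarith [Finset.sum_nonneg fun k (_ : k ∈ Finset.range (n + 1)) ↦
    P.penalty_nonneg k (x - P.iter k)]

lemma continuous_partialSum (n : ℕ) : Continuous (P.partialSum n) := by
  simp_rw [funext (P.partialSum_eq n)]
  exact P.continuous_f.add <| continuous_finsetSum _ fun k _ ↦
    (P.continuous_penalty k).comp (continuous_id.sub continuous_const)

def infValue (n : ℕ) : ℝ := sInf (P.partialSum n '' P.C)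

lemma infValue_le (n : ℕ) {x : X × Y} (hx : x ∈ P.C) : P.infValue n ≤ P.partialSum n x :=
  csInf_le ⟨P.m, by rintro _ ⟨z, hz, rfl⟩; exact P.le_partialSum n hz⟩ ⟨x, hx, rfl⟩

lemma iter_succ_spec (n : ℕ) : P.iter (n + 1) ∈ P.C ∧
    P.partialSum n (P.iter (n + 1)) ≤ P.infValue n + P.tol (n + 1) / 2 :=
  P.pick_spec _ (by linarith [P.tol_pos (n + 1)])

lemma iter_mem : ∀ n, P.iter n ∈ P.C
  | 0 => P.z₀_mem
  | n + 1 => (P.iter_succ_spec n).1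

lemma infValue_succ_le (n : ℕ) : P.infValue (n + 1) ≤ P.infValue n + P.tol (n + 1) := by
  have h := P.infValue_le (n + 1) (P.iter_mem (n + 1))
  rw [partialSum_succ, sub_self, penalty_zero] at h
  linarith [(P.iter_succ_spec n).2]

-- `tol n / 7 = ∑_{k > n} tol k` absorbs all later increments allowed by `infValue_succ_le`.
lemma antitone_infValue_add_tol : Antitone fun n ↦ P.infValue n + P.tol n / 7 :=
  antitone_nat_of_succ_le fun n ↦ by linarith [P.infValue_succ_le n, P.tol_succ n]

lemma partialSum_iter_le {n m : ℕ} (h : n ≤ m) :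
    P.partialSum n (P.iter (m + 1)) ≤ P.infValue n + P.tol n / 7 :=
  calc P.partialSum n (P.iter (m + 1)) ≤ P.partialSum m (P.iter (m + 1)) :=
        P.monotone_partialSum _ h
    _ ≤ P.infValue m + P.tol m / 7 := by
        linarith [(P.iter_succ_spec m).2, P.tol_succ m, P.tol_pos m]
    _ ≤ P.infValue n + P.tol n / 7 := P.antitone_infValue_add_tol h

lemma dist_iter_le (n : ℕ) :
    dist (P.iter (n + 1)) (P.iter (n + 1 + 1)) ≤ max P.r₁ P.r₂ * (1 / 4) ^ n := by
  set w := P.iter (n + 2) - P.iter (n + 1)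
  have hpen : P.penalty (n + 1) w ≤ 2 * P.tol (n + 1) := by
    have h := P.partialSum_succ n (P.iter (n + 2))
    linarith [(P.iter_succ_spec (n + 1)).2, P.infValue_le n (P.iter_mem (n + 2)),
      P.infValue_succ_le n, P.tol_succ (n + 1), P.tol_pos (n + 1)]
  have hmax : max (‖w.1‖ / P.r₁) (‖w.2‖ / P.r₂) ≤ 2 * (1 / 4) ^ (n + 1) := by
    have h := (P.weight_mul_max_le_penalty (n + 1) w).trans hpen
    have hw : P.weight (n + 1) * (2 * (1 / 4) ^ (n + 1)) = 2 * P.tol (n + 1) := by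
      rw [weight, tol, show (1 / 8 : ℝ) = 1 / 4 * (1 / 2) by norm_num, mul_pow]; ring
    exact le_of_mul_le_mul_left (hw ▸ h) (P.weight_pos _)
  have hR : 0 ≤ max P.r₁ P.r₂ := le_max_of_le_left P.r₁_pos.le
  rw [dist_comm, dist_eq_norm]
  calc ‖w‖ ≤ max P.r₁ P.r₂ * (2 * (1 / 4) ^ (n + 1)) :=
        (Prod.norm_le_max_mul P.r₁_pos P.r₂_pos w).trans (by gcongr)
    _ ≤ max P.r₁ P.r₂ * (1 / 4) ^ n := by
        gcongr
        rw [pow_succ]; linarith [pow_nonneg (by norm_num : (0 : ℝ) ≤ 1 / 4) n]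

lemma cauchySeq_iter : CauchySeq P.iter :=
  (cauchySeq_shift 1).1 (cauchySeq_of_le_geometric _ _ (by norm_num) P.dist_iter_le)

lemma summable_weight : Summable P.weight :=
  (summable_nat_add_iff 1).1 <| (summable_geometric_two.mul_left (P.δ * (1 / 2))).congr
    fun k ↦ by simp only [weight, pow_succ]; ring

lemma tsum_weight : ∑' k, P.weight k = P.σ₀ + P.δ := by
  rw [P.summable_weight.tsum_eq_zero_add]
  simp only [weight, pow_succ, ← mul_assoc]
  rw [tsum_mul_right, tsum_mul_left, tsum_geometric_two]
  ring

section Complete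

variable [CompleteSpace X] [CompleteSpace Y]

def limit : X × Y := limUnder atTop P.iter

lemma tendsto_iter : Tendsto P.iter atTop (𝓝 P.limit) := P.cauchySeq_iter.tendsto_limUnder

lemma limit_mem : P.limit ∈ P.C :=
  P.isClosed_C.mem_of_tendsto P.tendsto_iter (.of_forall P.iter_mem)

lemma partialSum_limit_le (n : ℕ) : P.partialSum n P.limit ≤ P.infValue n + P.tol n / 7 :=
  le_of_tendsto ((P.continuous_partialSum n).continuousAt.tendsto.comp
    (P.tendsto_iter.comp (tendsto_add_atTop_nat 1)))
    (eventually_atTop.2 ⟨n, fun _ ↦ P.partialSum_iter_le⟩)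

lemma σ₀_mul_max_le :
    P.σ₀ * max (‖P.limit.1 - P.z₀.1‖ / P.r₁) (‖P.limit.2 - P.z₀.2‖ / P.r₂) ≤
      P.f P.z₀ - P.f P.limit + P.δ := by
  have h₀ := P.partialSum_limit_le 0
  have h₁ := P.infValue_le 0 P.z₀_mem
  simp only [partialSum, sub_self, penalty_zero, tol, pow_zero, mul_one] at h₀ h₁
  have h₂ : P.σ₀ * max (‖P.limit.1 - P.z₀.1‖ / P.r₁) (‖P.limit.2 - P.z₀.2‖ / P.r₂) ≤
      P.penalty 0 (P.limit - P.z₀) := P.weight_mul_max_le_penalty 0 (P.limit - P.z₀)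
  linarith [P.δ_pos]

lemma summable_penalty_limit : Summable fun k ↦ P.penalty k (P.limit - P.iter k) := by
  refine summable_of_sum_range_le (c := P.infValue 0 + P.tol 0 / 7 - P.f P.limit)
    (fun k ↦ P.penalty_nonneg k _) fun n ↦ ?_
  have h := P.partialSum_eq n P.limit
  have hmono := P.antitone_infValue_add_tol (Nat.zero_le n)
  have hle := Finset.sum_le_sum_of_subset_of_nonneg (Finset.range_subset_range.2 n.le_succ)
    fun k _ _ ↦ P.penalty_nonneg k (P.limit - P.iter k)
  linarith [P.partialSum_limit_le n]

end Complete

section Derivative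

variable [InnerProductSpace ℝ X] [InnerProductSpace ℝ Y]

lemma exists_hasFDerivAt_penalty (k : ℕ) (w : X × Y) :
    ∃ L : X × Y →L[ℝ] ℝ, HasFDerivAt (P.penalty k) L w ∧
      ‖L‖ ≤ P.weight k * (1 / P.r₁ + 1 / P.r₂) ∧
      P.r₁ * ‖L.comp (inl ℝ X Y)‖ + P.r₂ * ‖L.comp (inr ℝ X Y)‖ ≤ P.weight k := by
  have hw := P.weight_pos k
  obtain ⟨L, hL, hnorm, hweighted⟩ := exists_hasFDerivAt_smoothMaxNorm
    (t := P.tol k / (3 * P.weight k)) (by have := P.tol_pos k; positivity) P.r₁_pos P.r₂_pos w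
  refine ⟨P.weight k • L, hL.const_mul _, ?_, ?_⟩
  · refine (opNorm_smul_le _ _).trans ?_
    rw [Real.norm_of_nonneg hw.le]
    gcongr
  · rw [smul_comp, smul_comp]
    have := opNorm_smul_le (P.weight k) (L.comp (inl ℝ X Y))
    have := opNorm_smul_le (P.weight k) (L.comp (inr ℝ X Y))
    rw [Real.norm_of_nonneg hw.le] at *
    nlinarith [mul_le_mul_of_nonneg_left hweighted hw.le, P.r₁_pos, P.r₂_pos]

lemma exists_hasFDerivAt_penalty_sub_iter : ∃ L : ℕ → X × Y → (X × Y →L[ℝ] ℝ),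
    (∀ k x, HasFDerivAt (fun x ↦ P.penalty k (x - P.iter k)) (L k x) x) ∧
    (∀ k x, ‖L k x‖ ≤ P.weight k * (1 / P.r₁ + 1 / P.r₂)) ∧
    ∀ k x, P.r₁ * ‖(L k x).comp (inl ℝ X Y)‖ + P.r₂ * ‖(L k x).comp (inr ℝ X Y)‖ ≤ P.weight k := by
  choose L hL hnorm hweighted using
    fun k (x : X × Y) ↦ P.exists_hasFDerivAt_penalty k (x - P.iter k)
  refine ⟨L, fun k x ↦ ?_, hnorm, hweighted⟩
  exact ((hL k x).comp x ((hasFDerivAt_id x).sub_const (P.iter k))).congr_fderiv (comp_id _)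

variable [CompleteSpace X] [CompleteSpace Y]

def perturbation (x : X × Y) : ℝ := ∑' k, P.penalty k (x - P.iter k)

lemma summable_penalty (x : X × Y) : Summable fun k ↦ P.penalty k (x - P.iter k) := by
  obtain ⟨L, hL, hnorm, -⟩ := P.exists_hasFDerivAt_penalty_sub_iter
  exact summable_of_summable_hasFDerivAt (𝕜 := ℝ) (P.summable_weight.mul_right _) hL hnorm
    P.summable_penalty_limit x

lemma exists_hasFDerivAt_perturbation : ∃ L : X × Y →L[ℝ] ℝ,
    HasFDerivAt P.perturbation L P.limit ∧
    P.r₁ * ‖L.comp (inl ℝ X Y)‖ + P.r₂ * ‖L.comp (inr ℝ X Y)‖ ≤ P.σ₀ + P.δ := by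
  obtain ⟨L, hL, hnorm, hweighted⟩ := P.exists_hasFDerivAt_penalty_sub_iter
  have hu := P.summable_weight.mul_right (1 / P.r₁ + 1 / P.r₂)
  refine ⟨∑' k, L k P.limit,
    hasFDerivAt_tsum (𝕜 := ℝ) hu hL hnorm P.summable_penalty_limit _, ?_⟩
  -- Without `E :=`, unifying the instances on `X × Y →L[ℝ] ℝ` times out.
  have hs : Summable fun k ↦ L k P.limit :=
    Summable.of_norm_bounded (E := X × Y →L[ℝ] ℝ) hu (hnorm · _)
  rw [← P.tsum_weight]
  exact weighted_norm_comp_tsum_le P.r₁_pos P.r₂_pos hs P.summable_weight (hweighted · _)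

lemma partialSum_le_add_perturbation (n : ℕ) (x : X × Y) :
    P.partialSum n x ≤ P.f x + P.perturbation x := by
  rw [partialSum_eq]
  gcongr
  exact (P.summable_penalty x).sum_le_tsum _ fun k _ ↦ P.penalty_nonneg k _

lemma tendsto_partialSum (x : X × Y) :
    Tendsto (fun n ↦ P.partialSum n x) atTop (𝓝 (P.f x + P.perturbation x)) := by
  simp_rw [partialSum_eq]
  exact ((P.summable_penalty x).hasSum.tendsto_sum_nat.comp (tendsto_add_atTop_nat 1)).const_add _

lemma isMinOn_add_perturbation : IsMinOn (P.f + P.perturbation) P.C P.limit := by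
  refine isMinOn_iff.2 fun x hx ↦ le_of_tendsto_of_tendsto' (P.tendsto_partialSum P.limit)
    (by simpa using (P.tendsto_tol.div_const 7).const_add (P.f x + P.perturbation x)) fun n ↦ ?_
  linarith [P.partialSum_le_add_perturbation n x, P.infValue_le n hx, P.partialSum_limit_le n]

end Derivative

end SmoothVariationalData

theorem exists_isMinOn_add_smooth_perturbation {X Y : Type*} [NormedAddCommGroup X]
    [InnerProductSpace ℝ X] [CompleteSpace X] [NormedAddCommGroup Y] [InnerProductSpace ℝ Y]
    [CompleteSpace Y] {C : Set (X × Y)} (hC : IsClosed C) {f : X × Y → ℝ} (hf : Continuous f)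
    {m ε : ℝ} (hm : ∀ z ∈ C, m ≤ f z) {z₀ : X × Y} (hz₀ : z₀ ∈ C) (hfz₀ : f z₀ < m + ε)
    {r₁ r₂ : ℝ} (hr₁ : 0 < r₁) (hr₂ : 0 < r₂) :
    ∃ y ∈ C, ‖y.1 - z₀.1‖ < r₁ ∧ ‖y.2 - z₀.2‖ < r₂ ∧ f y < m + ε ∧
      ∃ (Φ : X × Y → ℝ) (L : X × Y →L[ℝ] ℝ), IsMinOn (f + Φ) C y ∧ HasFDerivAt Φ L y ∧
        r₁ * ‖L.comp (inl ℝ X Y)‖ + r₂ * ‖L.comp (inr ℝ X Y)‖ < ε := by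
  have he : 0 ≤ f z₀ - m := sub_nonneg.2 (hm z₀ hz₀)
  -- With `e = f z₀ - m < ε`, these choices give `e + δ < σ₀` and `σ₀ + δ < ε`.
  let P : SmoothVariationalData X Y :=
    { C, isClosed_C := hC, f, continuous_f := hf, m, le_f := hm, z₀, z₀_mem := hz₀, r₁, r₂,
      σ₀ := (f z₀ - m + ε) / 2, δ := (ε - (f z₀ - m)) / 4, r₁_pos := hr₁, r₂_pos := hr₂,
      σ₀_pos := by linarith, δ_pos := by linarith }
  obtain ⟨L, hL, hLε⟩ := P.exists_hasFDerivAt_perturbation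
  have hloc : (f z₀ - m + ε) / 2 * max (‖P.limit.1 - z₀.1‖ / r₁) (‖P.limit.2 - z₀.2‖ / r₂) ≤
      f z₀ - f P.limit + (ε - (f z₀ - m)) / 4 := P.σ₀_mul_max_le
  have hmem : P.limit ∈ C := P.limit_mem
  refine ⟨P.limit, hmem, ?_, ?_, ?_, P.perturbation, L, P.isMinOn_add_perturbation, hL, by
    change _ ≤ (f z₀ - m + ε) / 2 + (ε - (f z₀ - m)) / 4 at hLε; linarith⟩
  all_goals
    generalize P.limit = y at hloc hmem ⊢
    have hmax_nonneg : 0 ≤ max (‖y.1 - z₀.1‖ / r₁) (‖y.2 - z₀.2‖ / r₂) :=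
      le_max_of_le_left (by positivity)
    have hmax : max (‖y.1 - z₀.1‖ / r₁) (‖y.2 - z₀.2‖ / r₂) < 1 := by nlinarith [hm y hmem]
  · exact (div_lt_one hr₁).1 ((le_max_left ..).trans_lt hmax)
  · exact (div_lt_one hr₂).1 ((le_max_right ..).trans_lt hmax)
  · nlinarith [hm y hmem]

section Normal

variable {X : Type*} [NormedAddCommGroup X] [InnerProductSpace ℝ X]

lemma smul_mem_frechetNormal {Ω : Set X} {a v : X} (hv : v ∈ frechetNormal Ω a) {c : ℝ}
    (hc : 0 < c) : c • v ∈ frechetNormal Ω a := by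
  intro ε hε
  obtain ⟨δ, hδ, h⟩ := hv (ε / c) (by positivity)
  refine ⟨δ, hδ, fun x hx hne hd ↦ ?_⟩
  rw [real_inner_smul_left]
  calc c * inner ℝ v (x - a) ≤ c * (ε / c * ‖x - a‖) := by gcongr; exact h x hx hne hd
    _ = ε * ‖x - a‖ := by field_simp

lemma neg_mem_frechetNormal_of_isMinOn {Ω : Set X} {φ : X → ℝ} {a g : X} (hmin : IsMinOn φ Ω a)
    (hφ : HasFDerivAt φ (innerSL ℝ g) a) : -g ∈ frechetNormal Ω a := by
  intro ε hε
  obtain ⟨δ, hδ, h⟩ := Metric.eventually_nhds_iff.1 (hφ.isLittleO.def hε)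
  refine ⟨δ, hδ, fun x hx _ hd ↦ ?_⟩
  have hx' := h (by rwa [dist_eq_norm])
  simp only [innerSL_apply_apply, Real.norm_eq_abs] at hx'
  rw [inner_neg_left]
  linarith [(abs_le.1 hx').2, isMinOn_iff.1 hmin x hx]

lemma mul_infDist_frechetNormal_le_of_isMinOn [CompleteSpace X] {Ω : Set X} {φ : X → ℝ}
    {a v : X} {M : X →L[ℝ] ℝ} {s : ℝ} (hs : 0 < s) (hmin : IsMinOn φ Ω a)
    (hφ : HasFDerivAt φ (M - s • innerSL ℝ v) a) :
    s * Metric.infDist v (frechetNormal Ω a) ≤ ‖M‖ := by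
  set m := (InnerProductSpace.toDual ℝ X).symm M
  have hgrad : M - s • innerSL ℝ v = innerSL ℝ (m - s • v) := by
    ext x; simp [m, InnerProductSpace.toDual_symm_apply]
  have hnormal := smul_mem_frechetNormal
    (neg_mem_frechetNormal_of_isMinOn hmin (hgrad ▸ hφ)) (inv_pos.2 hs)
  have hdist : v - s⁻¹ • -(m - s • v) = s⁻¹ • m := by
    rw [smul_neg, smul_sub, smul_smul, inv_mul_cancel₀ hs.ne', one_smul]; abel
  calc s * Metric.infDist v (frechetNormal Ω a) ≤ s * ‖s⁻¹ • m‖ := by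
        gcongr
        rw [← hdist, ← dist_eq_norm]
        exact Metric.infDist_le_dist_of_mem hnormal
    _ = ‖M‖ := by
        rw [norm_smul, Real.norm_of_nonneg (by positivity), ← mul_assoc, mul_inv_cancel₀ hs.ne',
          one_mul, LinearIsometryEquiv.norm_map]

lemma hasFDerivAt_norm_rpow_of_ne_zero {x : X} (hx : x ≠ 0) (p : ℝ) :
    HasFDerivAt (fun x : X ↦ ‖x‖ ^ p) ((p * ‖x‖ ^ (p - 2)) • innerSL ℝ x) x := by
  convert ((hasStrictFDerivAt_norm_sq x).rpow_const (p := p / 2)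
    (.inl (pow_ne_zero 2 (norm_ne_zero_iff.2 hx)))).hasFDerivAt using 1
  · ext y
    rw [← Real.rpow_natCast_mul (norm_nonneg _)]
    ring_nf
  · simp_rw [← Real.rpow_natCast_mul (norm_nonneg _), ← Nat.cast_smul_eq_nsmul ℝ, smul_smul]
    ring_nf

lemma mul_infDist_frechetNormal_prod_le [CompleteSpace X] {A B : Set X} {a b u : X} {q : ℝ}
    (ha : a ∈ A) (hb : b ∈ B) (hq : 0 < q) (hv : b - a + u ≠ 0) {Φ : X × X → ℝ}
    {L : X × X →L[ℝ] ℝ}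
    (hmin : IsMinOn ((fun z : X × X ↦ ‖z.2 - z.1 + u‖ ^ q) + Φ) (A ×ˢ B) (a, b))
    (hΦ : HasFDerivAt Φ L (a, b)) :
    q * ‖b - a + u‖ ^ (q - 2) * Metric.infDist (b - a + u) (frechetNormal A a) ≤
        ‖L.comp (inl ℝ X X)‖ ∧
      q * ‖b - a + u‖ ^ (q - 2) * Metric.infDist (a - b - u) (frechetNormal B b) ≤
        ‖L.comp (inr ℝ X X)‖ := by
  have hs : 0 < q * ‖b - a + u‖ ^ (q - 2) := by have := norm_pos_iff.2 hv; positivity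
  have hgrad := hasFDerivAt_norm_rpow_of_ne_zero hv q
  constructor
  · refine mul_infDist_frechetNormal_le_of_isMinOn (φ := fun x ↦ ‖b - x + u‖ ^ q + Φ (x, b)) hs
      (isMinOn_iff.2 fun x hx ↦ isMinOn_iff.1 hmin (x, b) ⟨hx, hb⟩) ?_
    refine ((hgrad.comp a (((hasFDerivAt_id a).const_sub b).add_const u)).add
      (hΦ.comp a (hasFDerivAt_prodMk_left a b))).congr_fderiv ?_
    ext y
    simp only [comp_neg, comp_id, add_apply, neg_apply, smul_apply, coe_innerSL_apply,
      smul_eq_mul, comp_apply, inl_apply, sub_apply]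
    ring
  · refine mul_infDist_frechetNormal_le_of_isMinOn (φ := fun y ↦ ‖y - a + u‖ ^ q + Φ (a, y)) hs
      (isMinOn_iff.2 fun y hy ↦ isMinOn_iff.1 hmin (a, y) ⟨ha, hy⟩) ?_
    refine ((hgrad.comp b (((hasFDerivAt_id b).sub_const a).add_const u)).add
      (hΦ.comp b (hasFDerivAt_prodMk_right a b))).congr_fderiv ?_
    ext y
    simp only [map_add, map_sub, smul_add, comp_id, add_apply, smul_apply, sub_apply,
      coe_innerSL_apply, smul_eq_mul, comp_apply, inr_apply]
    ring

end Normal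

section SetDist

variable {X : Type*} [NormedAddCommGroup X]

lemma setDist_nonneg (S T : Set X) : 0 ≤ setDist S T :=
  Real.sInf_nonneg <| by rintro _ ⟨s, -, t, -, rfl⟩; exact norm_nonneg _

lemma setDist_image_sub_le {A B : Set X} {a b : X} (ha : a ∈ A) (hb : b ∈ B) (u : X) :
    setDist ((fun z ↦ z - u) '' A) B ≤ ‖b - a + u‖ := by
  refine csInf_le ⟨0, ?_⟩ ⟨a - u, ⟨a, ha, rfl⟩, b, hb, ?_⟩
  · rintro _ ⟨s, -, t, -, rfl⟩; exact norm_nonneg _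
  · rw [← norm_neg]; congr 1; abel

end SetDist

end

theorem stmt15_general {X : Type*} [NormedAddCommGroup X] [InnerProductSpace ℝ X]
    [CompleteSpace X]
    (A B : Set X) (hA : IsClosed A) (hB : IsClosed B)
    (xbar : X) (hxbar : xbar ∈ A ∩ B) (u : X) (ε q : ℝ) (hq : 0 < q)
    (hne : ((fun z => z - u) '' A) ∩ B = ∅)
    (hd : ‖u‖ ^ q < (setDist ((fun z => z - u) '' A) B) ^ q + ε) :
    ∀ lam > (0 : ℝ), ∀ eta > (0 : ℝ),
      ∃ a ∈ A ∩ Metric.ball xbar lam, ∃ b ∈ B ∩ Metric.ball xbar eta,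
        0 < ‖b - a + u‖ ∧
        ‖b - a + u‖ ^ q < (setDist ((fun z => z - u) '' A) B) ^ q + ε ∧
        q * ‖b - a + u‖ ^ (q - 2) *
          (lam * Metric.infDist (b - a + u) (frechetNormal A a) +
            eta * Metric.infDist (a - b - u) (frechetNormal B b)) < ε := by
  intro lam hlam eta heta
  obtain ⟨⟨a, b⟩, ⟨ha, hb⟩, hadist, hbdist, hval, Φ, L, hmin, hΦ, hL⟩ :=
    exists_isMinOn_add_smooth_perturbation (hA.prod hB)
      ((by fun_prop : Continuous fun z : X × X ↦ ‖z.2 - z.1 + u‖).rpow_const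
        fun _ ↦ .inr hq.le)
      (fun z hz ↦ Real.rpow_le_rpow (setDist_nonneg _ _) (setDist_image_sub_le hz.1 hz.2 u) hq.le)
      (z₀ := (xbar, xbar)) hxbar (by simpa using hd) hlam heta
  dsimp only at ha hb hadist hbdist hval
  have hv : b - a + u ≠ 0 := fun h ↦ (Set.eq_empty_iff_forall_notMem.1 hne b)
    ⟨⟨a, ha, show a - u = b by rw [← sub_eq_zero, ← neg_eq_zero, ← h]; abel⟩, hb⟩
  obtain ⟨hnA, hnB⟩ := mul_infDist_frechetNormal_prod_le ha hb hq hv hmin hΦ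
  refine ⟨a, ⟨ha, by rwa [Metric.mem_ball, dist_eq_norm]⟩, b,
    ⟨hb, by rwa [Metric.mem_ball, dist_eq_norm]⟩, norm_pos_iff.2 hv, hval, ?_⟩
  calc q * ‖b - a + u‖ ^ (q - 2) * (lam * Metric.infDist (b - a + u) (frechetNormal A a) +
        eta * Metric.infDist (a - b - u) (frechetNormal B b))
      = lam * (q * ‖b - a + u‖ ^ (q - 2) * Metric.infDist (b - a + u) (frechetNormal A a)) +
        eta * (q * ‖b - a + u‖ ^ (q - 2) * Metric.infDist (a - b - u) (frechetNormal B b)) := by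
        ring
    _ ≤ lam * ‖L.comp (inl ℝ X X)‖ + eta * ‖L.comp (inr ℝ X X)‖ := by gcongr
    _ < ε := hL

/-- Hölder-type dual necessary conditions for two closed sets in a
Hilbert space with `(A−u) ∩ B = ∅`; powers are real powers (`rpow`). -/
theorem stmt15 {X : Type*} [NormedAddCommGroup X] [InnerProductSpace ℝ X]
    [CompleteSpace X]
    (A B : Set X) (hA : IsClosed A) (hB : IsClosed B)
    (xbar : X) (hxbar : xbar ∈ A ∩ B) (u : X) (ε q : ℝ) (hε : 0 < ε) (hq : 0 < q)
    (hne : ((fun z => z - u) '' A) ∩ B = ∅)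
    (hd : ‖u‖ ^ q < (setDist ((fun z => z - u) '' A) B) ^ q + ε) :
    ∀ lam > (0 : ℝ), ∀ eta > (0 : ℝ),
      ∃ a ∈ A ∩ Metric.ball xbar lam, ∃ b ∈ B ∩ Metric.ball xbar eta,
        0 < ‖b - a + u‖ ∧
        ‖b - a + u‖ ^ q < (setDist ((fun z => z - u) '' A) B) ^ q + ε ∧
        q * ‖b - a + u‖ ^ (q - 2) *
          (lam * Metric.infDist (b - a + u) (frechetNormal A a) +
            eta * Metric.infDist (a - b - u) (frechetNormal B b)) < ε :=
  stmt15_general A B hA hB xbar hxbar u ε q hq hne hd
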